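/- arXiv:1512.05107 — 2 statements merged into one kernel-verified Lean document; each statement's English description precedes it below -/
import Mathlib

section
/- Let k be an algebraically closed field and let m, n ≥ 2 be integers with gcd(m, n) = 1 such that mn is invertible in k (i.e., the image of m·n in k is nonzero). Then for every nonzero α ∈ k, the polynomial Y^m + α X^n is irreducible in the polynomial ring k[X, Y]. -/
/-!
As `gcd(m, n) = 1`, one of `m, n` is odd. Swapping the variables or dividing by `α`, the
polynomial becomes `Y ^ n - β X ^ m` with `n` odd, a monic polynomial over `k[X]`. By Gauss's lemma
it is enough to prove it irreducible over `k(X)`, and by the Kummer-type criterion for odd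
exponents it is enough that `β X ^ m` is not a `p`-th power in `k(X)` for any prime `p ∣ n`. This
is seen on degrees: `p ∤ m`, while the degree of a `p`-th power is divisible by `p`.
-/

open MvPolynomial

theorem Nat.Coprime.odd_or_odd {m n : ℕ} (h : m.Coprime n) : Odd m ∨ Odd n := by
  by_contra! hc
  simp only [Nat.not_odd_iff_even] at hc
  exact Nat.not_coprime_of_dvd_of_dvd one_lt_two hc.1.two_dvd hc.2.two_dvd h

namespace RatFunc

variable {K : Type*} [Field K]

theorem intDegree_pow (x : RatFunc K) (p : ℕ) : intDegree (x ^ p) = p * intDegree x := by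
  rcases eq_or_ne x 0 with rfl | hx
  · rcases p with _ | p <;> simp
  induction p with
  | zero => simp
  | succ p ih =>
    rw [pow_succ, intDegree_mul (pow_ne_zero _ hx) hx, ih]
    push_cast; ring

theorem pow_ne_C_mul_X_pow {p n : ℕ} (hpn : ¬ p ∣ n) {β : K} (hβ : β ≠ 0) (b : RatFunc K) :
    b ^ p ≠ C β * X ^ n := by
  intro h
  have hdeg := congrArg intDegree h
  rw [intDegree_pow, intDegree_mul (by simpa using hβ) (pow_ne_zero _ X_ne_zero),
    intDegree_pow, intDegree_C, intDegree_X, zero_add, mul_one] at hdeg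
  exact hpn (Int.natCast_dvd_natCast.mp ⟨_, hdeg.symm⟩)

end RatFunc

namespace Polynomial

theorem irreducible_X_pow_sub_C_C_mul_X_pow {K : Type*} [Field K] {n m : ℕ} (hn : Odd n)
    (hnm : n.Coprime m) {β : K} (hβ : β ≠ 0) :
    Irreducible (X ^ n - C (C β * X ^ m) : K[X][X]) := by
  rw [(monic_X_pow_sub_C _ hn.pos.ne').irreducible_iff_irreducible_map_fraction_map
    (K := RatFunc K), Polynomial.map_sub, Polynomial.map_pow, map_X, map_C, map_mul, map_pow,
    RatFunc.algebraMap_C, RatFunc.algebraMap_X]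
  refine X_pow_sub_C_irreducible_of_odd hn fun p hp hpn b ↦ RatFunc.pow_ne_C_mul_X_pow ?_ hβ b
  exact fun hpm ↦ hp.one_lt.ne' (Nat.eq_one_of_dvd_coprimes hnm hpn hpm)

end Polynomial

namespace MvPolynomial

variable (R : Type*) [CommSemiring R]

noncomputable def finTwoAlgEquiv : MvPolynomial (Fin 2) R ≃ₐ[R] Polynomial (Polynomial R) :=
  (finSuccEquiv R 1).trans (Polynomial.mapAlgEquiv (uniqueAlgEquiv R (Fin 1)))

@[simp]
theorem finTwoAlgEquiv_X_zero : finTwoAlgEquiv R (X 0) = Polynomial.X := by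
  simp [finTwoAlgEquiv, finSuccEquiv_X_zero]

@[simp]
theorem finTwoAlgEquiv_X_one : finTwoAlgEquiv R (X 1) = Polynomial.C Polynomial.X := by
  rw [finTwoAlgEquiv, AlgEquiv.trans_apply, ← Fin.succ_zero_eq_one, finSuccEquiv_X_succ]
  simp

@[simp]
theorem finTwoAlgEquiv_C (c : R) :
    finTwoAlgEquiv R (C c) = Polynomial.C (Polynomial.C c) :=
  (finTwoAlgEquiv R).commutes c

theorem irreducible_X_zero_pow_add_C_mul_X_one_pow {K : Type*} [Field K] {n m : ℕ} (hn : Odd n)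
    (hnm : n.Coprime m) {β : K} (hβ : β ≠ 0) :
    Irreducible (X 0 ^ n + C β * X 1 ^ m : MvPolynomial (Fin 2) K) := by
  rw [← MulEquiv.irreducible_iff (finTwoAlgEquiv K)]
  convert Polynomial.irreducible_X_pow_sub_C_C_mul_X_pow hn hnm (neg_ne_zero.mpr hβ) using 1
  simp [sub_eq_add_neg]

end MvPolynomial

theorem stmt_3_general (k : Type*) [Field k] (m n : ℕ)
    (hgcd : Nat.gcd m n = 1) (α : k) (hα : α ≠ 0) :
    Irreducible ((X 1 : MvPolynomial (Fin 2) k) ^ m + C α * (X 0) ^ n) := by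
  rcases Nat.Coprime.odd_or_odd hgcd with hm | hn
  · have hswap : rename (Equiv.swap 0 1) (X 0 ^ m + C α * X 1 ^ n : MvPolynomial (Fin 2) k)
        = X 1 ^ m + C α * X 0 ^ n := by
      simp
    rw [← hswap, ← renameEquiv_apply, MulEquiv.irreducible_iff]
    exact irreducible_X_zero_pow_add_C_mul_X_one_pow hm hgcd hα
  · have hfactor : (X 1 ^ m + C α * X 0 ^ n : MvPolynomial (Fin 2) k)
        = C α * (X 0 ^ n + C α⁻¹ * X 1 ^ m) := by
      rw [mul_add, ← mul_assoc, ← C_mul, mul_inv_cancel₀ hα, C_1, one_mul, add_comm]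
    rw [hfactor, irreducible_isUnit_mul ((Ne.isUnit hα).map C)]
    exact irreducible_X_zero_pow_add_C_mul_X_one_pow hn (Nat.coprime_comm.mp hgcd) (inv_ne_zero hα)

/-- Let `k` be an algebraically closed field and `m, n ≥ 2` integers with `gcd(m,n) = 1`
such that `m·n` is invertible in `k`. Then for every nonzero `α ∈ k`, the polynomial
`Y^m + α X^n` is irreducible in `k[X, Y]`. -/
theorem stmt_3 (k : Type*) [Field k] [IsAlgClosed k] (m n : ℕ)
    (hm : 2 ≤ m) (hn : 2 ≤ n) (hgcd : Nat.gcd m n = 1)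
    (hchar : ((m * n : ℕ) : k) ≠ 0) (α : k) (hα : α ≠ 0) :
    Irreducible ((X 1 : MvPolynomial (Fin 2) k) ^ m + C α * (X 0) ^ n) :=
  stmt_3_general k m n hgcd α hα
end

section
/- Let k be an algebraically closed field, let d ≥ 2 be an integer, and let m, n ≥ 2 be integers with gcd(m, n) = 1 such that mn is invertible in k (i.e., the image of m·n in k is nonzero). Let a, b ≥ 1 be integers with a + b = n, and let u_1, …, u_{d−1} be k-linearly independent linear forms in the variables X, Z, W_3, …, W_d. Then the quotient ring k[X, Y, Z, W_3, …, W_d]/(X^n + Y^m + X^a Z^b + W_3^n + ⋯ + W_d^n, u_1, …, u_{d−1}) has exactly one minimal prime ideal (when d = 2 the ring is k[X, Y, Z]/(X^n + Y^m + X^a Z^b, u_1)). -/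
/-!
Linearly independent forms `u_1, …, u_{d-1}` in `X, Z, W_3, …, W_d` cut out a line `k • v` in that
`d`-space, so modulo them every variable other than `Y` equals `v_i t` for one parameter `t`. As
`X^n + X^a Z^b + ∑ W_j^n` is homogeneous of degree `n`, the ring becomes `k[t, Y] / (Y^m + α t^n)`
for a constant `α`. If `α = 0`, its only minimal prime is `(Y)`. Otherwise `Y^m + α t^n` is prime:
with `α s^n = -1` it generates the kernel of `k[t, Y] → k[T]`, `t ↦ s T^m`, `Y ↦ T^n`, because
every class has a representative `∑_{j<m} r_j(t) Y^j`, whose image `∑_{j<m} r_j(s T^m) T^(n j)`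
has summands of pairwise distinct degrees since `gcd(m, n) = 1`.
-/

open MvPolynomial
open scoped Polynomial

section MinimalPrimes

variable {R : Type*} [CommRing R]

theorem existsUnique_mem_minimalPrimes_quotient {I P : Ideal R} (h : I.minimalPrimes = {P}) :
    ∃! Q, Q ∈ minimalPrimes (R ⧸ I) := by
  rw [Ideal.minimalPrimes_eq_comap] at h
  have hcomap : ∀ Q ∈ minimalPrimes (R ⧸ I), Q.comap (Ideal.Quotient.mk I) = P :=
    fun Q hQ => h.subset (Set.mem_image_of_mem _ hQ)
  obtain ⟨Q, hQ, -⟩ : P ∈ _ := h ▸ Set.mem_singleton P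
  exact ⟨Q, hQ, fun Q' hQ' => Ideal.comap_injective_of_surjective _ Ideal.Quotient.mk_surjective
    ((hcomap Q' hQ').trans (hcomap Q hQ).symm)⟩

theorem Ideal.minimalPrimes_span_singleton_pow {p : R} (hp : Prime p) {m : ℕ} (hm : m ≠ 0) :
    (Ideal.span {p ^ m}).minimalPrimes = {Ideal.span {p}} := by
  have := (Ideal.span_singleton_prime hp.ne_zero).mpr hp
  rw [← Ideal.radical_minimalPrimes, ← Ideal.span_singleton_pow, Ideal.radical_pow _ hm,
    this.radical, Ideal.minimalPrimes_eq_subsingleton_self]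

end MinimalPrimes

theorem Nat.eq_of_mul_add_mul_eq {m n a a' j j' : ℕ} (hmn : m.Coprime n) (hj : j < m)
    (hj' : j' < m) (h : m * a + n * j = m * a' + n * j') : j = j' := by
  have hmod : n * j ≡ n * j' [MOD m] := by
    simpa [Nat.ModEq, Nat.add_mod, Nat.mul_mod_right] using congrArg (· % m) h
  exact Nat.ModEq.eq_of_lt_of_lt (Nat.ModEq.cancel_left_of_coprime hmn hmod) hj hj'

namespace Polynomial

variable {k : Type*} [Field k] {m n : ℕ}

theorem eq_zero_of_eval₂_compRingHom_eq_zero (hm : 0 < m) (hmn : m.Coprime n) {s : k}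
    (hs : s ≠ 0) {r : k[X][X]} (hr : r.degree < m)
    (h : r.eval₂ (compRingHom (C s * X ^ m)) (X ^ n) = 0) : r = 0 := by
  by_contra hr0
  have hq : (C s * X ^ m).natDegree = m := natDegree_C_mul_X_pow _ _ hs
  have hcomp : ∀ p : k[X], p ≠ 0 → p.comp (C s * X ^ m) ≠ 0 := fun p hp h => by
    rcases comp_eq_zero_iff.1 h with h | ⟨-, h⟩
    · exact hp h
    · simpa [hq, hm.ne'] using congrArg natDegree h
  set f : ℕ → k[X] := fun j => (r.coeff j).comp (C s * X ^ m) * (X ^ n) ^ j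
  have hXn : ∀ j, ((X : k[X]) ^ n) ^ j ≠ 0 := fun j => pow_ne_zero _ (pow_ne_zero _ X_ne_zero)
  have hf0 : ∀ j ∈ r.support, f j ≠ 0 := fun j hj =>
    mul_ne_zero (hcomp _ (mem_support_iff.1 hj)) (hXn j)
  have hdeg : ∀ j ∈ r.support, (f j).natDegree = m * (r.coeff j).natDegree + n * j :=
    fun j hj => by
      rw [natDegree_mul (hcomp _ (mem_support_iff.1 hj)) (hXn j), natDegree_comp, hq,
        natDegree_pow, natDegree_pow, natDegree_X, mul_comm, mul_one, mul_comm n]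
  have hlt : ∀ j ∈ r.support, j < m := fun j hj =>
    (le_natDegree_of_mem_supp j hj).trans_lt ((natDegree_lt_iff_degree_lt hr0).2 hr)
  have hdisj :
      Set.Pairwise {j | j ∈ r.support ∧ f j ≠ 0} (Function.onFun Ne (degree ∘ f)) := by
    rintro j ⟨hj, -⟩ j' ⟨hj', -⟩ hne heq
    have heq' := natDegree_eq_of_degree_eq heq
    rw [hdeg j hj, hdeg j' hj'] at heq'
    exact hne (Nat.eq_of_mul_add_mul_eq hmn (hlt j hj) (hlt j' hj') heq')
  have hsup := degree_sum_eq_of_disjoint f r.support hdisj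
  rw [show ∑ j ∈ r.support, f j = 0 by rw [← h, eval₂_eq_sum]; rfl, degree_zero, eq_comm,
    Finset.sup_eq_bot_iff] at hsup
  obtain ⟨j, hj⟩ := nonempty_support_iff.2 hr0
  exact hf0 j hj (degree_eq_bot.1 (hsup j hj))

theorem ker_eval₂_compRingHom (hm : 0 < m) (hn : 0 < n) (hmn : m.Coprime n) {α s : k}
    (hs : α * s ^ n = -1) :
    RingHom.ker (eval₂RingHom (compRingHom (C s * X ^ m)) (X ^ n)) =
      Ideal.span {X ^ m + C (C α * X ^ n)} := by
  set E := eval₂RingHom (compRingHom (C s * X ^ m)) (X ^ n)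
  set q : k[X][X] := X ^ m + C (C α * X ^ n)
  have hEq : E q = 0 := by
    simp only [E, q, coe_eval₂RingHom, eval₂_add, eval₂_X_pow, eval₂_C, coe_compRingHom,
      mul_comp, C_comp, X_pow_comp, mul_pow, ← C_pow, ← pow_mul]
    have hαs : C α * C (s ^ n) = (-1 : k[X]) := by rw [← C_mul, hs, C_neg, C_1]
    linear_combination (X ^ (n * m) : k[X]) * hαs
  have hq : q.Monic := monic_X_pow_add_C _ hm.ne'
  have hs0 : s ≠ 0 := ne_zero_pow hn.ne' (right_ne_zero_of_mul (hs ▸ neg_ne_zero.2 one_ne_zero))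
  refine le_antisymm (fun p hp => Ideal.mem_span_singleton.2 ?_) ?_
  · rw [← modByMonic_eq_zero_iff_dvd hq]
    refine eq_zero_of_eval₂_compRingHom_eq_zero hm hmn hs0 ?_ ?_
    · simpa only [q, degree_X_pow_add_C hm] using degree_modByMonic_lt p hq
    · have := congrArg E (modByMonic_add_div p q)
      rwa [map_add, map_mul, hEq, zero_mul, add_zero, RingHom.mem_ker.1 hp] at this
  · rw [Ideal.span_le, Set.singleton_subset_iff]
    exact hEq

theorem prime_X_pow_add_C_mul_X_pow [IsAlgClosed k] (hm : 0 < m) (hn : 0 < n)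
    (hmn : m.Coprime n) {α : k} (hα : α ≠ 0) : Prime (X ^ m + C (C α * X ^ n) : k[X][X]) := by
  obtain ⟨s, hs⟩ := IsAlgClosed.exists_pow_nat_eq (-α⁻¹) hn
  have hker := ker_eval₂_compRingHom (s := s) hm hn hmn (by rw [hs, mul_neg, mul_inv_cancel₀ hα])
  rw [← Ideal.span_singleton_prime (monic_X_pow_add_C _ hm.ne').ne_zero, ← hker]
  exact RingHom.ker_isPrime _

theorem exists_minimalPrimes_span_X_pow_add_C_mul_X_pow [IsAlgClosed k] (hm : 0 < m)
    (hn : 0 < n) (hmn : m.Coprime n) (α : k) :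
    ∃ P, (Ideal.span {(X ^ m + C (C α * X ^ n) : k[X][X])}).minimalPrimes = {P} := by
  rcases eq_or_ne α 0 with rfl | hα
  · exact ⟨_, by simpa using Ideal.minimalPrimes_span_singleton_pow prime_X hm.ne'⟩
  · have hq := prime_X_pow_add_C_mul_X_pow hm hn hmn hα
    have := (Ideal.span_singleton_prime hq.ne_zero).2 hq
    exact ⟨_, Ideal.minimalPrimes_eq_subsingleton_self⟩

end Polynomial

theorem Module.Dual.apply_eq_sum_mul_apply_single {R ι : Type*} [CommRing R] [Fintype ι]
    [DecidableEq ι] (φ : Module.Dual R (ι → R)) (w : ι → R) :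
    φ w = ∑ j, w j * φ (Pi.single j 1) := by
  conv_lhs => rw [← Finset.univ_sum_single w, map_sum]
  refine Finset.sum_congr rfl fun j _ => ?_
  rw [← smul_eq_mul, ← map_smul, ← Pi.single_smul', smul_eq_mul, mul_one]

theorem Submodule.exists_dual_ker_eq_and_apply_basis_eq_one {K V ι : Type*} [Field K]
    [AddCommGroup V] [Module K V] [FiniteDimensional K V] {W : Submodule K V}
    (hW : Module.finrank K W + 1 = Module.finrank K V) (b : Module.Basis ι K V) :
    ∃ φ : Module.Dual K V, LinearMap.ker φ = W ∧ ∃ i, φ (b i) = 1 := by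
  have hlt : W < ⊤ := lt_top_iff_ne_top.2 fun h => by rw [h, finrank_top] at hW; omega
  obtain ⟨f, hf, hfW⟩ := W.exists_dual_map_eq_bot_of_lt_top hlt inferInstance
  obtain ⟨i, hi⟩ : ∃ i, f (b i) ≠ 0 := by
    by_contra! h
    exact hf (b.ext fun i => by simpa using h i)
  refine ⟨(f (b i))⁻¹ • f, ?_, i, by simp [hi]⟩
  have hrange : LinearMap.range f = ⊤ :=
    LinearMap.range_eq_top.2 fun a => ⟨(a / f (b i)) • b i, by simp [hi]⟩
  have hrank := LinearMap.finrank_range_add_finrank_ker f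
  rw [hrange, finrank_top, Module.finrank_self] at hrank
  rw [LinearMap.ker_smul _ _ (inv_ne_zero hi)]
  exact (Submodule.eq_of_le_of_finrank_eq (LinearMap.le_ker_iff_map.2 hfW) (by omega)).symm

namespace MvPolynomial

variable {σ R : Type*} [CommRing R]

theorem X_sub_C_mul_X_mem_span_sum_C_mul_X {ι κ : Type*} [Fintype ι] [DecidableEq ι]
    (s : ι → σ) {c : κ → ι → R} {φ : Module.Dual R (ι → R)}
    (hker : LinearMap.ker φ = Submodule.span R (Set.range c)) {j₀ : ι}
    (hφ : φ (Pi.single j₀ 1) = 1) (j : ι) :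
    X (s j) - C (φ (Pi.single j 1)) * X (s j₀) ∈
      Ideal.span (Set.range fun i => ∑ j, C (c i j) * X (s j)) := by
  set L := Fintype.linearCombination R (fun j => (X (s j) : MvPolynomial σ R))
  have hspan : Submodule.span R (Set.range c) ≤
      ((Ideal.span (Set.range fun i => ∑ j, C (c i j) * X (s j))).restrictScalars R).comap L :=
    Submodule.span_le.2 <| Set.range_subset_iff.2 fun i => by
      simpa [L, Fintype.linearCombination_apply, smul_eq_C_mul] using
        Ideal.subset_span (Set.mem_range_self i)
  have hmem : Pi.single j 1 - φ (Pi.single j 1) • Pi.single j₀ 1 ∈ LinearMap.ker φ := by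
    simp [hφ]
  have h := hspan (hker ▸ hmem)
  rwa [Submodule.mem_comap, map_sub, map_smul, Fintype.linearCombination_apply_single,
    Fintype.linearCombination_apply_single, one_smul, one_smul, smul_eq_C_mul] at h

variable [DecidableEq σ]

/-- Pull-back to the plane `x y = Y`, `x i = V i * t` (`i ≠ y`), where `t` is the inner variable
`C X` and `Y` the outer variable `X` of `R[X][X]`. -/
noncomputable def restrictPlane (y : σ) (V : σ → R) : MvPolynomial σ R →ₐ[R] R[X][X] :=
  aeval (Function.update (fun i => Polynomial.C (Polynomial.C (V i) * Polynomial.X)) y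
    Polynomial.X)

noncomputable def planeSection (y i₀ : σ) : R[X][X] →+* MvPolynomial σ R :=
  Polynomial.eval₂RingHom (Polynomial.eval₂RingHom C (X i₀)) (X y)

variable {y i₀ : σ} {V : σ → R}

@[simp]
theorem restrictPlane_X_self : restrictPlane y V (X y) = Polynomial.X := by
  simp [restrictPlane]

@[simp]
theorem restrictPlane_X_of_ne {i : σ} (hi : i ≠ y) :
    restrictPlane y V (X i) = Polynomial.C (Polynomial.C (V i) * Polynomial.X) := by
  simp [restrictPlane, hi]

theorem restrictPlane_planeSection (hi₀ : i₀ ≠ y) (hV : V i₀ = 1) (p : R[X][X]) :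
    restrictPlane y V (planeSection y i₀ p) = p := by
  have h : (restrictPlane y V).toRingHom.comp (planeSection y i₀) = RingHom.id _ :=
    Polynomial.ringHom_ext' (Polynomial.ringHom_ext (fun r => by simp [planeSection])
      (by simp [planeSection, hi₀, hV])) (by simp [planeSection])
  exact congrArg (· p) h

theorem restrictPlane_surjective (hi₀ : i₀ ≠ y) (hV : V i₀ = 1) :
    Function.Surjective (restrictPlane y V) :=
  fun p => ⟨planeSection y i₀ p, restrictPlane_planeSection hi₀ hV p⟩

theorem comap_map_restrictPlane (hi₀ : i₀ ≠ y) (hV : V i₀ = 1) {I : Ideal (MvPolynomial σ R)}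
    (hI : ∀ i ≠ y, X i - C (V i) * X i₀ ∈ I) :
    (I.map (restrictPlane y V)).comap (restrictPlane y V) = I := by
  have hmod : (Ideal.Quotient.mk I).comp ((planeSection y i₀).comp (restrictPlane y V).toRingHom)
      = Ideal.Quotient.mk I := by
    refine MvPolynomial.ringHom_ext (fun r => by simp [planeSection]) fun i => ?_
    by_cases hi : i = y
    · subst hi; simp [planeSection]
    · simpa [planeSection, hi] using (Ideal.Quotient.eq.2 (hI i hi)).symm
  rw [Ideal.comap_map_of_surjective _ (restrictPlane_surjective hi₀ hV), sup_eq_left]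
  intro r hr
  rw [← Ideal.Quotient.eq_zero_iff_mem, ← RingHom.congr_fun hmod r]
  simp [Ideal.mem_bot.1 (Ideal.mem_comap.1 hr)]

section LinearForms

variable {ι κ : Type*} [Fintype ι] [DecidableEq ι] {s : ι → σ} {φ : Module.Dual R (ι → R)}

theorem restrictPlane_sum_C_mul_X_eq_zero (hs : ∀ j, s j ≠ y)
    (hV : ∀ j, V (s j) = φ (Pi.single j 1)) {w : ι → R} (hw : φ w = 0) :
    restrictPlane y V (∑ j, C (w j) * X (s j)) = 0 := by
  have hsum : ∑ j, w j * V (s j) = 0 := by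
    rw [← hw, Module.Dual.apply_eq_sum_mul_apply_single φ w]
    simp only [hV]
  calc restrictPlane y V (∑ j, C (w j) * X (s j))
      = Polynomial.C (Polynomial.C (∑ j, w j * V (s j)) * Polynomial.X) := by
        simp [hs, Finset.sum_mul, mul_assoc]
    _ = 0 := by rw [hsum, map_zero, zero_mul, map_zero]

/-- `hker`, `hφ`, `hV` say that the linear forms `∑ j, c i j * x (s j)` cut out the line through
`V ∘ s`. -/
theorem span_union_range_eq_comap_restrictPlane (hs : Set.range s = {y}ᶜ) {c : κ → ι → R}
    (hker : LinearMap.ker φ = Submodule.span R (Set.range c)) {j₀ : ι}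
    (hφ : φ (Pi.single j₀ 1) = 1) (hV : ∀ j, V (s j) = φ (Pi.single j 1))
    (f : MvPolynomial σ R) :
    Ideal.span ({f} ∪ Set.range fun i => ∑ j, C (c i j) * X (s j)) =
      (Ideal.span {restrictPlane y V f}).comap (restrictPlane y V) := by
  have hsy : ∀ j, s j ≠ y := fun j => (hs ▸ Set.mem_range_self j : s j ∈ ({y}ᶜ : Set σ))
  have hcomap := comap_map_restrictPlane (V := V) (hsy j₀) (by rw [hV, hφ])
    (I := Ideal.span ({f} ∪ Set.range fun i => ∑ j, C (c i j) * X (s j))) fun i hi => by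
      obtain ⟨j, rfl⟩ : i ∈ Set.range s := hs ▸ hi
      rw [hV]
      exact Ideal.span_mono Set.subset_union_right
        (X_sub_C_mul_X_mem_span_sum_C_mul_X s hker hφ j)
  have hforms : Ideal.span (Set.range ((restrictPlane y V) ∘ fun i => ∑ j, C (c i j) * X (s j)))
      = ⊥ := by
    refine Ideal.span_eq_bot.2 ?_
    rintro _ ⟨i, rfl⟩
    exact restrictPlane_sum_C_mul_X_eq_zero hsy hV
      (LinearMap.mem_ker.1 (hker ▸ Submodule.subset_span (Set.mem_range_self i)))
  rw [← hcomap, Ideal.map_span, Set.image_union, Set.image_singleton, ← Set.range_comp,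
    Ideal.span_union, hforms, sup_bot_eq]

end LinearForms

end MvPolynomial

noncomputable abbrev definingPoly (k : Type*) [Field k] (d m n a b : ℕ) :
    MvPolynomial (Fin (d + 1)) k :=
  X 0 ^ n + X 1 ^ m + X 0 ^ a * X 2 ^ b +
    ∑ j ∈ Finset.univ.filter (fun j : Fin (d + 1) => 3 ≤ (j : ℕ)), X j ^ n

theorem exists_restrictPlane_definingPoly {k : Type*} [Field k] {d m n a b : ℕ} (hd : 2 ≤ d)
    (hab : a + b = n) (V : Fin (d + 1) → k) :
    ∃ α, restrictPlane 1 V (definingPoly k d m n a b) =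
      Polynomial.X ^ m + Polynomial.C (Polynomial.C α * Polynomial.X ^ n) := by
  have hval : ∀ i : Fin (d + 1), i ≠ 1 ↔ (i : ℕ) ≠ 1 := fun i => by
    rw [Ne, Fin.ext_iff, Fin.val_one', Nat.mod_eq_of_lt (by omega)]
  have h0 : (0 : Fin (d + 1)) ≠ 1 := (hval 0).2 (by simp)
  have h2 : (2 : Fin (d + 1)) ≠ 1 :=
    (hval 2).2 (by simp [Nat.mod_eq_of_lt (show 2 < d + 1 by omega)])
  have hW : ∀ j ∈ Finset.univ.filter (fun j : Fin (d + 1) => 3 ≤ (j : ℕ)), j ≠ 1 :=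
    fun j hj => (hval j).2 (by simp at hj; omega)
  refine ⟨V 0 ^ n + V 0 ^ a * V 2 ^ b +
    ∑ j ∈ Finset.univ.filter (fun j : Fin (d + 1) => 3 ≤ (j : ℕ)), V j ^ n, ?_⟩
  subst hab
  simp only [definingPoly, map_add, map_pow, map_mul, map_sum, restrictPlane_X_self,
    restrictPlane_X_of_ne h0, restrictPlane_X_of_ne h2]
  rw [Finset.sum_congr rfl fun j hj => by rw [restrictPlane_X_of_ne (hW j hj)]]
  simp only [mul_pow, map_mul, ← Finset.sum_mul]
  ring

theorem stmt_16_general (k : Type*) [Field k] [IsAlgClosed k] (d m n a b : ℕ)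
    (hd : 2 ≤ d) (hm : 2 ≤ m) (hn : 2 ≤ n) (hgcd : Nat.gcd m n = 1)
    (hab : a + b = n)
    (c : Fin (d - 1) → Fin d → k) (hc : LinearIndependent k c) :
    ∃! P : Ideal (MvPolynomial (Fin (d + 1)) k ⧸
        Ideal.span ({(X 0 : MvPolynomial (Fin (d + 1)) k) ^ n + (X 1) ^ m
            + (X 0) ^ a * (X 2) ^ b
            + ∑ j ∈ Finset.univ.filter (fun j : Fin (d + 1) => 3 ≤ (j : ℕ)), (X j) ^ n}
          ∪ Set.range (fun i : Fin (d - 1) =>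
              ∑ j : Fin d, C (c i j) *
                (X ((1 : Fin (d + 1)).succAbove j) : MvPolynomial (Fin (d + 1)) k)))),
      P ∈ minimalPrimes (MvPolynomial (Fin (d + 1)) k ⧸
        Ideal.span ({(X 0 : MvPolynomial (Fin (d + 1)) k) ^ n + (X 1) ^ m
            + (X 0) ^ a * (X 2) ^ b
            + ∑ j ∈ Finset.univ.filter (fun j : Fin (d + 1) => 3 ≤ (j : ℕ)), (X j) ^ n}
          ∪ Set.range (fun i : Fin (d - 1) =>
              ∑ j : Fin d, C (c i j) *
                (X ((1 : Fin (d + 1)).succAbove j) : MvPolynomial (Fin (d + 1)) k)))) := by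
  obtain ⟨φ, hker, j₀, hφj₀⟩ :=
    (Submodule.span k (Set.range c)).exists_dual_ker_eq_and_apply_basis_eq_one
      (by rw [finrank_span_eq_card hc, Module.finrank_fin_fun, Fintype.card_fin]; omega)
      (Pi.basisFun k (Fin d))
  rw [Pi.basisFun_apply] at hφj₀
  set V : Fin (d + 1) → k := Function.extend (Fin.succAbove 1) (fun j => φ (Pi.single j 1)) 0
  have hV : ∀ j, V (Fin.succAbove 1 j) = φ (Pi.single j 1) := fun j =>
    Fin.succAbove_right_injective.extend_apply _ _ _
  obtain ⟨α, hα⟩ := exists_restrictPlane_definingPoly (m := m) hd hab V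
  obtain ⟨P, hP⟩ :=
    Polynomial.exists_minimalPrimes_span_X_pow_add_C_mul_X_pow (by omega) (by omega) hgcd α
  refine existsUnique_mem_minimalPrimes_quotient (P := P.comap (restrictPlane 1 V)) ?_
  rw [span_union_range_eq_comap_restrictPlane (Fin.range_succAbove 1) hker hφj₀ hV, hα,
    ← Ideal.comap_coe, Ideal.comap_minimalPrimes_eq_of_surjective
      (f := (restrictPlane 1 V : MvPolynomial (Fin (d + 1)) k →+* k[X][X]))
      (restrictPlane_surjective (Fin.succAbove_ne 1 j₀) (by rw [hV, hφj₀])), hP,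
    Set.image_singleton, Ideal.comap_coe]

/-- Let `k` be an algebraically closed field, `d ≥ 2`, and `m, n ≥ 2` integers with
`gcd(m,n) = 1` such that `m·n` is invertible in `k`, and `a, b ≥ 1` with `a + b = n`.
Let `u_1, …, u_{d−1}` be `k`-linearly independent linear forms in the `d` variables
`X, Z, W_3, …, W_d` (given by linearly independent coefficient vectors `c i : Fin d → k`;
the variables `X, Y, Z, W_3, …, W_d` are indexed by `0, 1, 2, 3, …, d` in `Fin (d+1)`,
and `Fin.succAbove 1` enumerates the variables other than `Y`). Then
`k[X, Y, Z, W_3, …, W_d]/(X^n + Y^m + X^a Z^b + W_3^n + ⋯ + W_d^n, u_1, …, u_{d−1})`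
has exactly one minimal prime. -/
theorem stmt_16 (k : Type*) [Field k] [IsAlgClosed k] (d m n a b : ℕ)
    (hd : 2 ≤ d) (hm : 2 ≤ m) (hn : 2 ≤ n) (hgcd : Nat.gcd m n = 1)
    (hchar : ((m * n : ℕ) : k) ≠ 0) (ha : 1 ≤ a) (hb : 1 ≤ b) (hab : a + b = n)
    (c : Fin (d - 1) → Fin d → k) (hc : LinearIndependent k c) :
    ∃! P : Ideal (MvPolynomial (Fin (d + 1)) k ⧸
        Ideal.span ({(X 0 : MvPolynomial (Fin (d + 1)) k) ^ n + (X 1) ^ m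
            + (X 0) ^ a * (X 2) ^ b
            + ∑ j ∈ Finset.univ.filter (fun j : Fin (d + 1) => 3 ≤ (j : ℕ)), (X j) ^ n}
          ∪ Set.range (fun i : Fin (d - 1) =>
              ∑ j : Fin d, C (c i j) *
                (X ((1 : Fin (d + 1)).succAbove j) : MvPolynomial (Fin (d + 1)) k)))),
      P ∈ minimalPrimes (MvPolynomial (Fin (d + 1)) k ⧸
        Ideal.span ({(X 0 : MvPolynomial (Fin (d + 1)) k) ^ n + (X 1) ^ m
            + (X 0) ^ a * (X 2) ^ b
            + ∑ j ∈ Finset.univ.filter (fun j : Fin (d + 1) => 3 ≤ (j : ℕ)), (X j) ^ n}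
          ∪ Set.range (fun i : Fin (d - 1) =>
              ∑ j : Fin d, C (c i j) *
                (X ((1 : Fin (d + 1)).succAbove j) : MvPolynomial (Fin (d + 1)) k)))) :=
  stmt_16_general k d m n a b hd hm hn hgcd hab c hc
end
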